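/- arXiv:2604.01744 — 3 statements merged into one kernel-verified Lean document; each statement's English description precedes it below -/
import Mathlib

section
/- Let s ∈ ℂ and A = (A_1,…,A_n) ∈ ℂⁿ. Suppose {f^{(k)}_{j,m}} and {f̃^{(k)}_{j,m}} are two formal solutions of the system dy_j/dt = i m_j y_j + ε V_j(ε, e^{±it}, y) such that (ii) their ε⁰ parts equal the unperturbed solution, i.e. f^{(0)}_{j,m} = f̃^{(0)}_{j,m} = A_j δ_{m,m_j} (constant polynomials), and (iii) their resonant coefficients agree at t = s, i.e. f^{(k)}_{j,m_j}(s) = f̃^{(k)}_{j,m_j}(s) for all k ≥ 0 and all 1 ≤ j ≤ n. Then the two formal solutions coincide: f^{(k)}_{j,m} = f̃^{(k)}_{j,m} for all k, j, m. -/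
noncomputable section

open Polynomial

/-- Finite `ℂ[t]`-linear combinations of Fourier modes `e^{i m t}` (`m : ℤ`):
the mode-`m` coefficient of `x` is the polynomial `x m`. -/
abbrev FourierPoly : Type := AddMonoidAlgebra (Polynomial ℂ) ℤ

/-- Formal power series in `ε` whose coefficients are finite Fourier sums with
polynomial-in-`t` coefficients. -/
abbrev FSeries : Type := PowerSeries FourierPoly

/-- The mode `e^{i t}`, as a unit of `FSeries` (inverse `e^{-i t}`). -/
def zUnit : FSeriesˣ where
  val := PowerSeries.C (AddMonoidAlgebra.single 1 1)
  inv := PowerSeries.C (AddMonoidAlgebra.single (-1) 1)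
  val_inv := by
    rw [← map_mul, AddMonoidAlgebra.single_mul_single]
    norm_num [AddMonoidAlgebra.one_def]
  inv_val := by
    rw [← map_mul, AddMonoidAlgebra.single_mul_single]
    norm_num [AddMonoidAlgebra.one_def]

/-- Evaluation of a Laurent polynomial in `z` (an element of `ℂ[z,z⁻¹] = AddMonoidAlgebra ℂ ℤ`)
at `z = e^{i t}`, landing in `FSeries`. -/
def zEval : AddMonoidAlgebra ℂ ℤ →+* FSeries :=
  AddMonoidAlgebra.liftNCRingHom
    ((PowerSeries.C (R := FourierPoly)).comp (AddMonoidAlgebra.singleZeroRingHom.comp (Polynomial.C : ℂ →+* Polynomial ℂ)))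
    ((Units.coeHom _).comp (zpowersHom _ zUnit))
    (fun _ _ => Commute.all _ _)

/-- Evaluation of `V ∈ ℂ[ε, z, z⁻¹, y₁, …, yₙ]` (encoded as a polynomial in the `y`-variables
with coefficients in `ℂ[z,z⁻¹][ε]`) at `z = e^{i t}`, `ε = ε` (the power series variable)
and given formal series values of the `y`-variables. -/
def VEval {n : ℕ} (V : MvPolynomial (Fin n) (Polynomial (AddMonoidAlgebra ℂ ℤ)))
    (y : Fin n → FSeries) : FSeries :=
  MvPolynomial.eval₂ (Polynomial.eval₂RingHom zEval PowerSeries.X) y V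

/-- The formal series `y_j(ε,t) = Σ_k ε^k Σ_m f^{(k)}_{j,m}(t) e^{i m t}` attached to a family
`f^{(k)}_{j,m}` of polynomials (with, for each `k` and `j`, finite support in `m`). -/
def famSeries {n : ℕ} (F : ℕ → Fin n → FourierPoly) (j : Fin n) : FSeries :=
  PowerSeries.mk fun k => F k j

/-- `F` encodes a formal solution `y_j(ε,t) = Σ_k ε^k Σ_m f^{(k)}_{j,m}(t) e^{i m t}` of the
system `dy_j/dt = i m_j y_j + ε V_j(ε, e^{± i t}, y)`: order by order in `ε` and mode by mode
in `e^{i m t}`,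
`(d/dt) f^{(k)}_{j,m} + i (m - m_j) f^{(k)}_{j,m} = [ε V_j(ε, e^{± i t}, y(ε,t))]_{ε^k e^{i m t}}`.
(Finiteness of the support in `m` at each order is built into `FourierPoly`.) -/
def IsFormalSolution {n : ℕ} (mvec : Fin n → ℤ)
    (V : Fin n → MvPolynomial (Fin n) (Polynomial (AddMonoidAlgebra ℂ ℤ)))
    (F : ℕ → Fin n → FourierPoly) : Prop :=
  ∀ (k : ℕ) (j : Fin n) (m : ℤ),
    derivative ((F k j).coeff m) + Polynomial.C (Complex.I * ((m : ℂ) - (mvec j : ℂ))) * (F k j).coeff m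
      = (PowerSeries.coeff (R := FourierPoly) k (PowerSeries.X * VEval (V j) (famSeries F))).coeff m

/-!
At order `ε^(k+1)` the right-hand side of the system only involves the orders `≤ k` of the
solution, so by induction on `k` the difference `d` of two mode-`m` coefficients of component
`j` solves `d' + i (m - m_j) d = 0`. Off resonance (`m ≠ m_j`) this forces `d = 0` by comparing
degrees; at resonance `d` is constant, and it vanishes at `t = s`.
-/

open PowerSeries in
theorem PowerSeries.mk_X_pow_succ_eq_iff {R : Type*} [CommRing R] (k : ℕ) (a b : R⟦X⟧) :
    Ideal.Quotient.mk (Ideal.span {(X : R⟦X⟧) ^ (k + 1)}) a =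
        Ideal.Quotient.mk (Ideal.span {(X : R⟦X⟧) ^ (k + 1)}) b ↔
      ∀ i ≤ k, coeff i a = coeff i b := by
  simp only [Ideal.Quotient.mk_eq_mk_iff_sub_mem, Ideal.mem_span_singleton, X_pow_dvd_iff,
    map_sub, sub_eq_zero, Nat.lt_succ_iff]

open PowerSeries in
theorem PowerSeries.coeff_eval₂_congr {R S σ : Type*} [CommRing R] [CommSemiring S]
    (f : S →+* R⟦X⟧) (W : MvPolynomial σ S) {y y' : σ → R⟦X⟧} {k : ℕ}
    (hy : ∀ j, ∀ i ≤ k, coeff i (y j) = coeff i (y' j)) :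
    coeff k (W.eval₂ f y) = coeff k (W.eval₂ f y') := by
  set q := Ideal.Quotient.mk (Ideal.span {(X : R⟦X⟧) ^ (k + 1)})
  have hq : q (W.eval₂ f y) = q (W.eval₂ f y') := by
    rw [MvPolynomial.eval₂_comp_left, MvPolynomial.eval₂_comp_left]
    congr 1
    funext j
    exact (mk_X_pow_succ_eq_iff k _ _).2 (hy j)
  exact (mk_X_pow_succ_eq_iff k _ _).1 hq k le_rfl

theorem Polynomial.eq_zero_of_derivative_add_C_mul_eq_zero {R : Type*} [CommRing R]
    [NoZeroDivisors R] {p : R[X]} {c : R} (hc : c ≠ 0) (h : derivative p + C c * p = 0) :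
    p = 0 := by
  by_contra hp
  have hlt := degree_derivative_lt hp
  rw [eq_neg_of_add_eq_zero_left h, degree_neg, degree_C_mul hc] at hlt
  exact lt_irrefl _ hlt

theorem Polynomial.eq_zero_of_derivative_eq_zero_of_eval_eq_zero {R : Type*} [CommRing R]
    [IsDomain R] [CharZero R] {p : R[X]} {s : R} (h : derivative p = 0) (hs : p.eval s = 0) :
    p = 0 := by
  rw [eq_C_of_derivative_eq_zero h] at hs ⊢
  rw [eval_C] at hs
  rw [hs, map_zero]

theorem IsFormalSolution.eq_succ_of_forall_le_eq {n : ℕ} {mvec : Fin n → ℤ}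
    {V : Fin n → MvPolynomial (Fin n) (Polynomial (AddMonoidAlgebra ℂ ℤ))}
    {F F' : ℕ → Fin n → FourierPoly}
    (hsol : IsFormalSolution mvec V F) (hsol' : IsFormalSolution mvec V F') {s : ℂ} {k : ℕ}
    (hle : ∀ l ≤ k, F l = F' l)
    (hres : ∀ j, ((F (k + 1) j).coeff (mvec j)).eval s = ((F' (k + 1) j).coeff (mvec j)).eval s) :
    F (k + 1) = F' (k + 1) := by
  funext j
  ext m : 1
  have hV : PowerSeries.coeff k (VEval (V j) (famSeries F)) =
      PowerSeries.coeff k (VEval (V j) (famSeries F')) :=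
    PowerSeries.coeff_eval₂_congr _ _ fun _ i hi => by
      simp only [famSeries, PowerSeries.coeff_mk, hle i hi]
  have h := hsol (k + 1) j m
  have h' := hsol' (k + 1) j m
  rw [PowerSeries.coeff_succ_X_mul, hV] at h
  rw [PowerSeries.coeff_succ_X_mul] at h'
  set d := (F (k + 1) j).coeff m - (F' (k + 1) j).coeff m with hd
  have hode : derivative d + Polynomial.C (Complex.I * ((m : ℂ) - (mvec j : ℂ))) * d = 0 := by
    rw [hd, derivative_sub]
    linear_combination h - h'
  rw [← sub_eq_zero, ← hd]
  by_cases hm : m = mvec j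
  · subst hm
    rw [sub_self, mul_zero, map_zero, zero_mul, add_zero] at hode
    exact eq_zero_of_derivative_eq_zero_of_eval_eq_zero hode (by rw [hd, eval_sub, hres j, sub_self])
  · refine eq_zero_of_derivative_add_C_mul_eq_zero (mul_ne_zero Complex.I_ne_zero ?_) hode
    exact sub_ne_zero.2 (by exact_mod_cast hm)

theorem secular_uniqueness_general {n : ℕ} (mvec : Fin n → ℤ)
    (V : Fin n → MvPolynomial (Fin n) (Polynomial (AddMonoidAlgebra ℂ ℤ)))
    (s : ℂ) (A : Fin n → ℂ)
    (F F' : ℕ → Fin n → FourierPoly)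
    (hsol : IsFormalSolution mvec V F) (hsol' : IsFormalSolution mvec V F')
    (hinit : ∀ j, F 0 j = AddMonoidAlgebra.single (mvec j) (Polynomial.C (A j)))
    (hinit' : ∀ j, F' 0 j = AddMonoidAlgebra.single (mvec j) (Polynomial.C (A j)))
    (hres : ∀ (k : ℕ) (j : Fin n), ((F k j).coeff (mvec j)).eval s = ((F' k j).coeff (mvec j)).eval s) :
    F = F' := by
  funext k
  induction k using Nat.strong_induction_on with
  | _ k ih =>
    cases k with
    | zero => funext j; rw [hinit j, hinit' j]
    | succ k =>
      exact hsol.eq_succ_of_forall_le_eq hsol' (fun l hl => ih l (Nat.lt_succ_of_le hl)) (hres (k + 1))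

/-- uniqueness of the naive perturbative solution, semisimple case:
two formal solutions of `dy_j/dt = i m_j y_j + ε V_j(ε,e^{±it},y)` whose `ε⁰` parts both equal
the unperturbed solution `A_j e^{i m_j t}` and whose resonant coefficients agree at `t = s`
coincide. -/
theorem secular_uniqueness {n : ℕ} (hn : 0 < n) (mvec : Fin n → ℤ)
    (V : Fin n → MvPolynomial (Fin n) (Polynomial (AddMonoidAlgebra ℂ ℤ)))
    (s : ℂ) (A : Fin n → ℂ)
    (F F' : ℕ → Fin n → FourierPoly)
    (hsol : IsFormalSolution mvec V F) (hsol' : IsFormalSolution mvec V F')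
    (hinit : ∀ j, F 0 j = AddMonoidAlgebra.single (mvec j) (Polynomial.C (A j)))
    (hinit' : ∀ j, F' 0 j = AddMonoidAlgebra.single (mvec j) (Polynomial.C (A j)))
    (hres : ∀ (k : ℕ) (j : Fin n), ((F k j).coeff (mvec j)).eval s = ((F' k j).coeff (mvec j)).eval s) :
    F = F' :=
  secular_uniqueness_general mvec V s A F F' hsol hsol' hinit hinit' hres

end
end

section
/- Define polynomials g_k ∈ ℚ[u] by g_0(u) = 1 and, for k ≥ 1, g_k(u) = (u / (2·k!)) · Π_{i=1}^{k−1} ((u + k)/2 − i). Then each g_k has degree k, and for every k ≥ 1 the difference recursion g_k(u+1) − g_k(u−1) = g_{k−1}(u) holds as an identity of polynomials in u. (In particular g_1(u) = u/2, g_2(u) = u²/8, g_3(u) = u(u²−1)/48, g_4(u) = u²(u²−4)/384, g_5(u) = u(u²−1)(u²−9)/3840.) -/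
noncomputable section

open Polynomial
open Finset

/-- The polynomials `g_k ∈ ℚ[u]`: `g_0(u) = 1` and, for `k ≥ 1`,
`g_k(u) = (u / (2·k!)) · Π_{i=1}^{k-1} ((u + k)/2 - i)`. -/
def g : ℕ → Polynomial ℚ
  | 0 => 1
  | (k + 1) =>
      Polynomial.C (1 / (2 * ((k + 1).factorial : ℚ))) * Polynomial.X *
        ∏ i ∈ Finset.range k,
          (Polynomial.C (1 / 2 : ℚ) * (Polynomial.X + Polynomial.C ((k + 1 : ℕ) : ℚ))
            - Polynomial.C ((i + 1 : ℕ) : ℚ))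

lemma g_succ (k : ℕ) :
    g (k+1) = C ((1:ℚ)/(2^(k+1) * (k+1).factorial)) *
      (X * ∏ i ∈ range k, (X + C ((k:ℚ) - 1 - 2*i))) := by
  show C (1 / (2 * ((k + 1).factorial : ℚ))) * X *
        ∏ i ∈ range k, (C (1 / 2 : ℚ) * (X + C ((k + 1 : ℕ) : ℚ)) - C ((i + 1 : ℕ) : ℚ)) = _
  have h : ∀ i ∈ range k,
      C (1 / 2 : ℚ) * (X + C ((k + 1 : ℕ) : ℚ)) - C ((i + 1 : ℕ) : ℚ)
        = C (1/2 : ℚ) * (X + C ((k:ℚ) - 1 - 2*i)) := by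
    intro i _
    rw [mul_add, mul_add, ← C_mul, ← C_mul, add_sub_assoc, ← C_sub]
    congr 1
    push_cast
    ring
  rw [Finset.prod_congr rfl h, Finset.prod_mul_distrib, Finset.prod_const, card_range, ← C_pow]
  rw [show ∀ (a b : ℚ) (P : Polynomial ℚ), C a * X * (C b * P) = C (a*b) * (X*P) from
    fun a b P => by rw [C_mul]; ring]
  congr 1
  rw [div_pow, one_pow, div_mul_div_comm, one_mul]
  congr 1
  ring

lemma g_const_ne (k : ℕ) : ((1:ℚ)/(2^(k+1) * (k+1).factorial)) ≠ 0 := by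
  positivity

lemma g_deg (k : ℕ) : (g k).degree = k := by
  cases k with
  | zero => simp [g]
  | succ k =>
    rw [g_succ, degree_mul, degree_mul, degree_C (g_const_ne k), degree_X, degree_prod]
    simp only [degree_X_add_C, Finset.sum_const, card_range, nsmul_eq_mul, mul_one]
    rw [zero_add, Nat.cast_add, Nat.cast_one, add_comm]


lemma key_quad (m : ℚ) :
    (X + C 1) * (X + C m) - (X - C 1) * (X - C m) = C (2*(m+1)) * X := by
  have h : (C (2*(m+1)) : Polynomial ℚ) = 2 * C m + 2 * C 1 := by
    rw [C_mul, C_add, map_ofNat C 2]; ring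
  rw [h]; ring

lemma prod_shift (k : ℕ) :
    ∏ i ∈ Finset.range (k+1), (X + C ((k:ℚ)+1-2*i)) =
      (X + C ((k:ℚ)+1)) * ∏ i ∈ Finset.range k, (X + C ((k:ℚ)-1-2*i)) := by
  rw [Finset.prod_range_succ', mul_comm]
  congr 1
  · push_cast; ring_nf
  · refine Finset.prod_congr rfl fun i _ => ?_
    congr 1
    push_cast; ring

lemma g_rec (k : ℕ) :
    (g (k+1)).comp (X + C 1) - (g (k+1)).comp (X - C 1) = g k := by
  cases k with
  | zero =>
    show (g 1).comp _ - (g 1).comp _ = 1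
    rw [g_succ]
    simp only [Finset.range_zero, Finset.prod_empty, mul_one, mul_comp, C_comp, X_comp]
    rw [← mul_sub, show (X + C 1) - (X - C 1) = (C 2 : Polynomial ℚ) by
      rw [C_1, map_ofNat C 2]; ring, ← C_mul]
    norm_num [Nat.factorial]
  | succ k =>
    rw [g_succ (k+1), g_succ k]
    simp only [mul_comp, C_comp, X_comp, Polynomial.prod_comp, add_comp, sub_comp]
    have h1 : ∀ i ∈ Finset.range (k+1),
        (X + C 1) + C (((k+1:ℕ):ℚ) - 1 - 2*i) = X + C ((k:ℚ)+1 - 2*i) := by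
      intro i _
      rw [add_assoc, ← C_add]
      congr 1; push_cast; ring
    have h2 : ∀ i ∈ Finset.range (k+1),
        (X - C 1) + C (((k+1:ℕ):ℚ) - 1 - 2*i) = X + C ((k:ℚ) - 1 - 2*i) := by
      intro i _
      rw [sub_add_eq_add_sub, add_sub_assoc, ← C_sub]
      congr 1; push_cast; ring
    rw [Finset.prod_congr rfl h1, Finset.prod_congr rfl h2, prod_shift,
      Finset.prod_range_succ]
    rw [show X + C ((k:ℚ) - 1 - 2*(k:ℕ)) = X - C ((k:ℚ)+1) by
      rw [sub_eq_add_neg X, ← C_neg]; congr 1; push_cast; ring]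
    have hq := key_quad ((k:ℚ)+1)
    have hc : C ((1:ℚ)/(2^(k+1+1) * ((k+1+1).factorial:ℚ))) * C (2*(((k:ℚ)+1)+1))
        = C ((1:ℚ)/(2^(k+1) * ((k+1).factorial:ℚ))) := by
      rw [← C_mul]
      congr 1
      rw [Nat.factorial_succ (k+1)]
      have h1 : ((k+1).factorial : ℚ) ≠ 0 := by positivity
      push_cast
      field_simp
      ring
    set P := ∏ i ∈ Finset.range k, (X + C ((k:ℚ)-1-2*i)) with hP
    linear_combination (C ((1:ℚ)/(2^(k+1+1) * ((k+1+1).factorial:ℚ))) * P) * hq + (X*P) * hc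

/-- each `g_k` has degree `k`, and for every `k ≥ 1` the difference
recursion `g_k(u+1) - g_k(u-1) = g_{k-1}(u)` holds as an identity of polynomials. -/
theorem g_degree_and_recursion :
    (∀ k : ℕ, (g k).degree = k)
    ∧ (∀ k : ℕ, 1 ≤ k →
        (g k).comp (Polynomial.X + Polynomial.C (1 : ℚ))
          - (g k).comp (Polynomial.X - Polynomial.C (1 : ℚ)) = g (k - 1)) := by
  refine ⟨g_deg, fun k hk => ?_⟩
  match k, hk with
  | (m+1), _ => exact g_rec m

end
end

section
/- Let ε ∈ ℝ, let U be a Laurent polynomial over ℂ satisfying U(−z) = U(z) for all z ≠ 0, let θ : ℝ → ℂ be a function satisfying sinh(θ(t)) = ε·U(e^{it}) and θ(t+π) = θ(t) for all t ∈ ℝ, and let μ₊ and μ₋ be Laurent polynomials over ℂ satisfying μ₊(−z) = μ₊(z) and μ₋(−z) = −μ₋(z) for all z ≠ 0. Define Y : ℝ → ℂ by Y(t) = e^{θ(t)·t/π}·μ₊(e^{it}) + e^{−θ(t)·t/π}·μ₋(e^{it}). Then Y satisfies the difference equation Y(t+π) − Y(t−π) = 2ε·U(e^{it})·Y(t) for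 all t ∈ ℝ. -/
/-!
Write `z = e^{it}`, `A = e^{θ(t)t/π} μ₊(z)` and `B = e^{-θ(t)t/π} μ₋(z)`, so that `Y(t) = A + B`.
Shifting `t` by `±π` replaces `z` by `-z` and, since `θ` is `π`-periodic, multiplies
`e^{±θ(t)t/π}` by `e^{±θ(t)}`; by the parities of `μ₊, μ₋` this gives
`Y(t+π) = e^{θ}A - e^{-θ}B` and `Y(t-π) = e^{-θ}A - e^{θ}B`, whose difference is
`(e^{θ} - e^{-θ})(A + B) = 2 sinh θ(t) · Y(t) = 2εU(z) Y(t)`.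
-/

noncomputable section

open Complex

/-- Evaluation of a Laurent polynomial `Σ_l c_l z^l` (encoded by its finitely supported
coefficient family `c : ℤ →₀ ℂ`) at a point `w : ℂ`. -/
def evalL (c : ℤ →₀ ℂ) (w : ℂ) : ℂ :=
  c.sum fun l a => a * w ^ l

/-- The all-orders renormalized solution
`Y(t) = e^{θ(t) t/π} μ₊(e^{it}) + e^{-θ(t) t/π} μ₋(e^{it})`. -/
def Yren (θ : ℝ → ℂ) (μp μm : ℤ →₀ ℂ) (t : ℝ) : ℂ :=
  Complex.exp (θ t * t / Real.pi) * evalL μp (Complex.exp (Complex.I * t))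
    + Complex.exp (-(θ t * t / Real.pi)) * evalL μm (Complex.exp (Complex.I * t))

lemma exp_I_mul_add_pi (t : ℝ) :
    exp (I * ((t + Real.pi : ℝ) : ℂ)) = -exp (I * t) := by
  push_cast
  rw [mul_add, exp_add, mul_comm I (Real.pi : ℂ), exp_pi_mul_I]
  ring

lemma exp_I_mul_sub_pi (t : ℝ) :
    exp (I * ((t - Real.pi : ℝ) : ℂ)) = -exp (I * t) := by
  push_cast
  rw [mul_sub, exp_sub, mul_comm I (Real.pi : ℂ), exp_pi_mul_I]
  field_simp

section Shift

variable {θ : ℝ → ℂ} {μp μm : ℤ →₀ ℂ}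

lemma Yren_add_pi (hθper : ∀ t : ℝ, θ (t + Real.pi) = θ t)
    (hμp : ∀ z : ℂ, z ≠ 0 → evalL μp (-z) = evalL μp z)
    (hμm : ∀ z : ℂ, z ≠ 0 → evalL μm (-z) = -evalL μm z) (t : ℝ) :
    Yren θ μp μm (t + Real.pi)
      = exp (θ t) * (exp (θ t * t / Real.pi) * evalL μp (exp (I * t)))
        - exp (-θ t) * (exp (-(θ t * t / Real.pi)) * evalL μm (exp (I * t))) := by
  have hexponent : θ (t + Real.pi) * ((t + Real.pi : ℝ) : ℂ) / Real.pi
      = θ t * t / Real.pi + θ t := by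
    rw [hθper]
    push_cast
    field_simp [ofReal_ne_zero.mpr Real.pi_ne_zero]
  rw [Yren, exp_I_mul_add_pi, hexponent, hμp _ (exp_ne_zero _), hμm _ (exp_ne_zero _),
    neg_add, exp_add, exp_add]
  ring

lemma Yren_sub_pi (hθper : ∀ t : ℝ, θ (t + Real.pi) = θ t)
    (hμp : ∀ z : ℂ, z ≠ 0 → evalL μp (-z) = evalL μp z)
    (hμm : ∀ z : ℂ, z ≠ 0 → evalL μm (-z) = -evalL μm z) (t : ℝ) :
    Yren θ μp μm (t - Real.pi)
      = exp (-θ t) * (exp (θ t * t / Real.pi) * evalL μp (exp (I * t)))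
        - exp (θ t) * (exp (-(θ t * t / Real.pi)) * evalL μm (exp (I * t))) := by
  have hθ : θ (t - Real.pi) = θ t := by simpa using (hθper (t - Real.pi)).symm
  have hexponent : θ (t - Real.pi) * ((t - Real.pi : ℝ) : ℂ) / Real.pi
      = θ t * t / Real.pi - θ t := by
    rw [hθ]
    push_cast
    field_simp [ofReal_ne_zero.mpr Real.pi_ne_zero]
  rw [Yren, exp_I_mul_sub_pi, hexponent, hμp _ (exp_ne_zero _), hμm _ (exp_ne_zero _),
    neg_sub, sub_eq_add_neg, sub_eq_neg_add, exp_add, exp_add]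
  ring

lemma Yren_add_pi_sub_Yren_sub_pi (hθper : ∀ t : ℝ, θ (t + Real.pi) = θ t)
    (hμp : ∀ z : ℂ, z ≠ 0 → evalL μp (-z) = evalL μp z)
    (hμm : ∀ z : ℂ, z ≠ 0 → evalL μm (-z) = -evalL μm z) (t : ℝ) :
    Yren θ μp μm (t + Real.pi) - Yren θ μp μm (t - Real.pi)
      = 2 * sinh (θ t) * Yren θ μp μm t := by
  rw [Yren_add_pi hθper hμp hμm, Yren_sub_pi hθper hμp hμm, Yren, sinh]
  ring

end Shift

theorem renormalized_solution_difference_equation_general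
    (ε : ℝ) (U μp μm : ℤ →₀ ℂ) (θ : ℝ → ℂ)
    (hμp : ∀ z : ℂ, z ≠ 0 → evalL μp (-z) = evalL μp z)
    (hμm : ∀ z : ℂ, z ≠ 0 → evalL μm (-z) = -evalL μm z)
    (hθ : ∀ t : ℝ, Complex.sinh (θ t) = (ε : ℂ) * evalL U (Complex.exp (Complex.I * t)))
    (hθper : ∀ t : ℝ, θ (t + Real.pi) = θ t) :
    ∀ t : ℝ,
      Yren θ μp μm (t + Real.pi) - Yren θ μp μm (t - Real.pi)
        = 2 * (ε : ℂ) * evalL U (Complex.exp (Complex.I * t)) * Yren θ μp μm t := by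
  intro t
  rw [Yren_add_pi_sub_Yren_sub_pi hθper hμp hμm, hθ]
  ring

/-- let `U` be an even Laurent polynomial, `θ : ℝ → ℂ` with
`sinh θ(t) = ε U(e^{it})` and `θ(t+π) = θ(t)`, and let `μ₊` be even and `μ₋` odd Laurent
polynomials.  Then `Y(t) = e^{θ(t)t/π} μ₊(e^{it}) + e^{-θ(t)t/π} μ₋(e^{it})` satisfies the
difference equation `Y(t+π) - Y(t-π) = 2 ε U(e^{it}) Y(t)`. -/
theorem renormalized_solution_difference_equation
    (ε : ℝ) (U μp μm : ℤ →₀ ℂ) (θ : ℝ → ℂ)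
    (hU : ∀ z : ℂ, z ≠ 0 → evalL U (-z) = evalL U z)
    (hμp : ∀ z : ℂ, z ≠ 0 → evalL μp (-z) = evalL μp z)
    (hμm : ∀ z : ℂ, z ≠ 0 → evalL μm (-z) = -evalL μm z)
    (hθ : ∀ t : ℝ, Complex.sinh (θ t) = (ε : ℂ) * evalL U (Complex.exp (Complex.I * t)))
    (hθper : ∀ t : ℝ, θ (t + Real.pi) = θ t) :
    ∀ t : ℝ,
      Yren θ μp μm (t + Real.pi) - Yren θ μp μm (t - Real.pi)
        = 2 * (ε : ℂ) * evalL U (Complex.exp (Complex.I * t)) * Yren θ μp μm t :=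
  renormalized_solution_difference_equation_general ε U μp μm θ hμp hμm hθ hθper
end
end
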